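/- Let u be a Sturmian sequence over {a, b} with slope θ = ρ_a(u)/ρ_b(u) < 1 and set δ = θ^{−1}. Then u contains a factor w with |w|_b = k and |w|_a = ℓ if and only if |ℓδ − k| < δ + 1. -/

import Mathlib

open Filter Topology Matrix
open scoped ENNReal

namespace Paper

variable {A : Type*}

/-- The factor of `u` of length `len` starting at position `i`. -/
def factorAt (u : ℕ → A) (i len : ℕ) : List A :=
  (List.range len).map fun k => u (i + k)

/-- The word `w` occurs in `u` at position `i`. -/
def OccursAt (u : ℕ → A) (w : List A) (i : ℕ) : Prop :=
  w = factorAt u i w.length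

/-- `w` is a factor of the sequence `u`. -/
def IsFactor (u : ℕ → A) (w : List A) : Prop :=
  ∃ i, OccursAt u w i

/-- `u` is recurrent: every factor occurs infinitely often. -/
def Recurrent (u : ℕ → A) : Prop :=
  ∀ w, IsFactor u w → ∀ N, ∃ i, N ≤ i ∧ OccursAt u w i

/-- `u` is uniformly recurrent: every factor occurs in every window of some fixed length. -/
def UniformlyRecurrent (u : ℕ → A) : Prop :=
  ∀ w, IsFactor u w → ∃ R, ∀ i, ∃ j, i ≤ j ∧ j < i + R ∧ OccursAt u w j

/-- `u` is eventually periodic. -/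
def EventuallyPeriodic (u : ℕ → A) : Prop :=
  ∃ p, 0 < p ∧ ∃ N, ∀ n, N ≤ n → u (n + p) = u n

/-- `u` is balanced: counts of each letter in equal-length factors differ by at most 1. -/
def IsBalanced [DecidableEq A] (u : ℕ → A) : Prop :=
  ∀ (c : A) (w w' : List A), IsFactor u w → IsFactor u w' → w.length = w'.length →
    (w.count c : ℤ) - (w'.count c : ℤ) ≤ 1

/-- `w^{n/|w|}`, i.e. the prefix of length `n` of `w^ω`, is a factor of `u`
(for a nonempty word `w`). -/
def HasPowerFactor (u : ℕ → A) (w : List A) (n : ℕ) : Prop :=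
  w ≠ [] ∧ ∃ i, ∀ k, k < n → u (i + k) = w.getD (k % w.length) (u i)

/-- The critical exponent `E(u)`. -/
noncomputable def critExp (u : ℕ → A) : ℝ≥0∞ :=
  sSup {e | ∃ w n, HasPowerFactor u w n ∧ e = (n : ℝ≥0∞) / (w.length : ℝ≥0∞)}

/-- The maximal exponent of a repetition whose root has length `l`. -/
noncomputable def maxExpLen (u : ℕ → A) (l : ℕ) : ℝ≥0∞ :=
  sSup {e | ∃ w n, (w : List A).length = l ∧ HasPowerFactor u w n ∧
    e = (n : ℝ≥0∞) / (l : ℝ≥0∞)}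

/-- The asymptotic critical exponent `E*(u)`. -/
noncomputable def acritExp (u : ℕ → A) : ℝ≥0∞ :=
  if critExp u = ⊤ then ⊤ else Filter.limsup (fun l => maxExpLen u l) Filter.atTop

/-- `w` is a right special factor of `u`. -/
def RightSpecial (u : ℕ → A) (w : List A) : Prop :=
  ∃ c c' : A, c ≠ c' ∧ IsFactor u (w ++ [c]) ∧ IsFactor u (w ++ [c'])

/-- `w` is a left special factor of `u`. -/
def LeftSpecial (u : ℕ → A) (w : List A) : Prop :=
  ∃ c c' : A, c ≠ c' ∧ IsFactor u (c :: w) ∧ IsFactor u (c' :: w)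

/-- `w` is a bispecial factor of `u`. -/
def Bispecial (u : ℕ → A) (w : List A) : Prop := LeftSpecial u w ∧ RightSpecial u w

/-- `r` is a return word to `w` in `u`: the word between two consecutive occurrences of `w`. -/
def IsReturnWord (u : ℕ → A) (w r : List A) : Prop :=
  ∃ i j, i < j ∧ OccursAt u w i ∧ OccursAt u w j ∧
    (∀ t, i < t → t < j → ¬ OccursAt u w t) ∧ r = factorAt u i (j - i)

/-- A Sturmian sequence: an aperiodic balanced sequence over the binary
alphabet `Bool` (`false` = letter a, `true` = letter b). -/
def IsSturmian (u : ℕ → Bool) : Prop :=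
  ¬ EventuallyPeriodic u ∧ IsBalanced u

/-- Prepend a letter to a sequence. -/
def prepend (c : A) (u : ℕ → A) : ℕ → A
  | 0 => c
  | n + 1 => u n

/-- A standard Sturmian sequence: `u`, `a·u` and `b·u` are all Sturmian. -/
def IsStandard (u : ℕ → Bool) : Prop :=
  IsSturmian u ∧ IsSturmian (prepend false u) ∧ IsSturmian (prepend true u)

/-- The letter `c` has frequency `ρ` in `u`. -/
def HasFreq [DecidableEq A] (u : ℕ → A) (c : A) (ρ : ℝ) : Prop :=
  Tendsto (fun n => ((factorAt u 0 n).count c : ℝ) / n) atTop (𝓝 ρ)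

/-- `u` has slope `θ = ρ_a(u)/ρ_b(u)`, with `b = true` the most frequent letter. -/
def HasSlope (u : ℕ → Bool) (θ : ℝ) : Prop :=
  ∃ ρa ρb : ℝ, HasFreq u false ρa ∧ HasFreq u true ρb ∧ ρa < ρb ∧ θ = ρa / ρb

/-- `cfP a N` is the numerator `p_{N-1}` of the convergents of the continued
fraction `[0; a 1, a 2, …]` (index shifted by one: `cfP a 0 = p_{-1} = 1`). -/
def cfP (a : ℕ → ℕ) : ℕ → ℕ
  | 0 => 1
  | 1 => 0
  | n + 2 => a (n + 1) * cfP a (n + 1) + cfP a n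

/-- `cfQ a N` is the denominator `q_{N-1}` of the convergents of the continued
fraction `[0; a 1, a 2, …]` (index shifted by one: `cfQ a 0 = q_{-1} = 0`). -/
def cfQ (a : ℕ → ℕ) : ℕ → ℕ
  | 0 => 0
  | 1 => 1
  | n + 2 => a (n + 1) * cfQ a (n + 1) + cfQ a n

/-- The value of the continued fraction `[0; a 1, a 2, …]`, as the limit of its
convergents `p_N / q_N`. -/
noncomputable def cfValue (a : ℕ → ℕ) : ℝ :=
  limUnder atTop fun N => (cfP a (N + 1) : ℝ) / (cfQ a (N + 1) : ℝ)

/-- `δ_N = [a_{N+1}; a_{N+2}, …]`, the inverse of the value of the shifted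
continued fraction `[0; a_{N+1}, a_{N+2}, …]`. -/
noncomputable def cfDelta (a : ℕ → ℕ) (N : ℕ) : ℝ :=
  (cfValue fun n => a (n + N))⁻¹

/-- `Q_{N-1} = p_{N-1} + q_{N-1}` (shifted index as in `cfP`, `cfQ`). -/
def cfQpair (a : ℕ → ℕ) (N : ℕ) : ℕ := cfP a N + cfQ a N

/-- The matrix `A_N` with rows `(p_{N-1}, p_N)` and `(q_{N-1}, q_N)`. -/
def cfMat (a : ℕ → ℕ) (N : ℕ) : Matrix (Fin 2) (Fin 2) ℤ :=
  !![(cfP a N : ℤ), (cfP a (N + 1) : ℤ); (cfQ a N : ℤ), (cfQ a (N + 1) : ℤ)]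

/-- The colouring of a binary sequence `u` by `y` (on the letter `a = false`) and
`y'` (on the letter `b = true`). -/
def colour (u : ℕ → Bool) (y y' : ℕ → A) (n : ℕ) : A :=
  if u n then y' ((List.range n).countP fun k => u k)
  else y ((List.range n).countP fun k => !u k)

/-- Colouring of a finite binary word by the sequences `y` and `y'`. -/
def colourWord : (ℕ → A) → (ℕ → A) → List Bool → List A
  | _, _, [] => []
  | y, y', c :: w =>
      if c then y' 0 :: colourWord y (fun n => y' (n + 1)) w
      else y 0 :: colourWord (fun n => y (n + 1)) y' w

/-- A constant gap sequence: every occurring letter occurs with a constant gap. -/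
def IsConstantGap (y : ℕ → A) : Prop :=
  ∀ c : A, (∃ n, y n = c) →
    ∃ g, 0 < g ∧ ∀ n, y n = c →
      y (n + g) = c ∧ ∀ t, 0 < t → t < g → y (n + t) ≠ c

/-- The minimal period of a sequence. -/
noncomputable def minPeriod (y : ℕ → A) : ℕ :=
  sInf {p | 0 < p ∧ ∀ n, y (n + p) = y n}

/-- `d` is a derived sequence of `u` to the factor `z`: coding (by a binary
alphabet, via an injective labelling `f` of return words) of the decomposition
of `u` into return words to `z`. -/
def IsDerivedSeq (u : ℕ → Bool) (z : List Bool) (d : ℕ → Bool) : Prop :=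
  ∃ (occ : ℕ → ℕ) (f : Bool → List Bool),
    StrictMono occ ∧ (∀ n, OccursAt u z (occ n)) ∧
    (∀ i, OccursAt u z i → ∃ n, occ n = i) ∧
    f true ≠ f false ∧
    ∀ n, factorAt u (occ n) (occ (n + 1) - occ n) = f (d n)

/-- The equivalence of unimodular matrices: `M ≡ M'` iff `diag(c,c')·M ≡ M'`
with the first row mod `Y` and the second row mod `Y'`, for some `c` coprime
with `Y` and `c'` coprime with `Y'`. -/
def MatEquiv (Y Y' : ℕ) (M M' : Matrix (Fin 2) (Fin 2) ℤ) : Prop :=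
  ∃ c c' : ℤ, IsCoprime c (Y : ℤ) ∧ IsCoprime c' (Y' : ℤ) ∧
    (∀ j, (Y : ℤ) ∣ (c * M 0 j - M' 0 j)) ∧
    (∀ j, (Y' : ℤ) ∣ (c' * M 1 j - M' 1 j))

/-- `δ > 1` is `(1+β)`-forcing for (the class of) the matrix `M`, with respect to
the periods `P`, `P'`. -/
def IsForcing (β : ℝ) (P P' : ℕ) (M : Matrix (Fin 2) (Fin 2) ℤ) (δ : ℝ) : Prop :=
  1 < δ ∧ ∃ m k l : ℕ, 0 < k + l ∧
    -- (P1)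
    ((P : ℤ) ∣ (M 0 0 * (l : ℤ) + M 0 1 * ((m : ℤ) * l + k)) ∧
     (P' : ℤ) ∣ (M 1 0 * (l : ℤ) + M 1 1 * ((m : ℤ) * l + k))) ∧
    -- (P2)
    ((m : ℝ) + 1 < δ ∧ |(l : ℝ) * (δ - m) - k| < δ - m + 1) ∧
    -- (P3)
    ((k = l → β < 1 / (k : ℝ)) ∧
     (l < k → β ≤ (1 + (m : ℝ)) / ((k : ℝ) + m * l)) ∧
     (k < l → β ≤ (2 + (m : ℝ)) / ((k : ℝ) + (m + 1) * l)))

/-- The set `F(β, M)` of `(1+β)`-forcing `δ`'s. -/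
def ForcingSet (β : ℝ) (P P' : ℕ) (M : Matrix (Fin 2) (Fin 2) ℤ) : Set ℝ :=
  {δ | IsForcing β P P' M δ}

/-- The set `D(β, M) = {δ > 1 : δ is not in the closure of F(β, M)}`. -/
def DSet (β : ℝ) (P P' : ℕ) (M : Matrix (Fin 2) (Fin 2) ℤ) : Set ℝ :=
  {δ | 1 < δ ∧ δ ∉ closure (ForcingSet β P P' M)}

/-- The finite Fibonacci words: fixed-point prefixes of `b ↦ ba`, `a ↦ b`,
where `b = true`, `a = false`. -/
def fibList : ℕ → List Bool
  | 0 => [true]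
  | 1 => [true, false]
  | n + 2 => fibList (n + 1) ++ fibList n

/-- The Fibonacci sequence, the fixed point of `b ↦ ba`, `a ↦ b`. -/
def fibWord (n : ℕ) : Bool := (fibList (n + 2)).getD n true

end Paper

/-! Balance together with the existence of the frequency `α` of the letter `a` confines the
number of `a`'s in every window of length `n` to `[nα - 1, nα + 1]`: the prefix of length
`N n` is tiled by `N` windows, each within `1` of any given one. Aperiodicity rules out
`nα ∈ ℤ` for `n > 0`, which makes the bounds strict, and forces every integer of
`(nα - 1, nα + 1)` to be attained, since otherwise all windows of length `n` would have the
same count. A factor with Parikh vector `(k, l)` is a window of length `k + l` with `l`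
letters `a`, and `|l - (k + l) α| < 1` becomes `|l δ - k| < δ + 1` after dividing by
`α = 1 / (δ + 1)`. -/

namespace Paper

section Words

variable {A : Type*}

@[simp]
lemma length_factorAt (u : ℕ → A) (i n : ℕ) : (factorAt u i n).length = n := by
  simp [factorAt]

@[simp]
lemma factorAt_one (u : ℕ → A) (i : ℕ) : factorAt u i 1 = [u i] := by
  simp [factorAt]

lemma factorAt_add (u : ℕ → A) (i m n : ℕ) :
    factorAt u i (m + n) = factorAt u i m ++ factorAt u (i + m) n := by
  simp [factorAt, List.range_add, Nat.add_assoc]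

lemma isFactor_factorAt (u : ℕ → A) (i n : ℕ) : IsFactor u (factorAt u i n) :=
  ⟨i, by rw [OccursAt, length_factorAt]⟩

lemma count_factorAt_mul [DecidableEq A] (u : ℕ → A) (c : A) (i n N : ℕ) :
    (factorAt u i (N * n)).count c = ∑ t ∈ Finset.range N, (factorAt u (i + t * n) n).count c := by
  induction N with
  | zero => simp [factorAt]
  | succ N ih => rw [Nat.succ_mul, factorAt_add, List.count_append, ih, Finset.sum_range_succ]

end Words

section Balanced

variable {A : Type*} [DecidableEq A] {u : ℕ → A}

lemma IsBalanced.count_factorAt_sub_le (hu : IsBalanced u) (c : A) (i j n : ℕ) :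
    ((factorAt u i n).count c : ℤ) - (factorAt u j n).count c ≤ 1 :=
  hu c _ _ (isFactor_factorAt u i n) (isFactor_factorAt u j n) (by simp)

lemma IsBalanced.abs_count_factorAt_mul_sub_le (hu : IsBalanced u) (c : A) (i j n N : ℕ) :
    |((factorAt u j (N * n)).count c : ℤ) - N * (factorAt u i n).count c| ≤ N := by
  have hsum : ((factorAt u j (N * n)).count c : ℤ) - N * (factorAt u i n).count c =
      ∑ t ∈ Finset.range N,
        (((factorAt u (j + t * n) n).count c : ℤ) - (factorAt u i n).count c) := by
    simp [count_factorAt_mul, Finset.sum_sub_distrib]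
  calc _ ≤ ∑ t ∈ Finset.range N,
          |((factorAt u (j + t * n) n).count c : ℤ) - (factorAt u i n).count c| :=
        hsum ▸ Finset.abs_sum_le_sum_abs _ _
    _ ≤ ∑ _t ∈ Finset.range N, (1 : ℤ) :=
        Finset.sum_le_sum fun t _ =>
          abs_sub_le_iff.2 ⟨hu.count_factorAt_sub_le c _ _ n, hu.count_factorAt_sub_le c _ _ n⟩
    _ = N := by simp

lemma IsBalanced.abs_count_factorAt_sub_mul_le (hu : IsBalanced u) {c : A} {α : ℝ}
    (hf : HasFreq u c α) (i n : ℕ) : |((factorAt u i n).count c : ℝ) - n * α| ≤ 1 := by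
  rcases n.eq_zero_or_pos with rfl | hn
  · simp [factorAt]
  have hblock (N : ℕ) :
      |((factorAt u 0 (N * n)).count c : ℝ) - N * ((factorAt u i n).count c : ℝ)| ≤ N := by
    exact_mod_cast hu.abs_count_factorAt_mul_sub_le c i 0 n N
  generalize ((factorAt u i n).count c : ℝ) = x at hblock ⊢
  have hn' : (0 : ℝ) < n := by exact_mod_cast hn
  have hlim : Tendsto (fun N : ℕ => |((factorAt u 0 (N * n)).count c : ℝ) / (N * n : ℕ) - x / n|)
      atTop (𝓝 |α - x / n|) :=
    ((hf.comp (tendsto_id.atTop_mul_const' hn)).sub_const _).abs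
  have hclose : |α - x / n| ≤ 1 / n := by
    refine le_of_tendsto hlim ((eventually_gt_atTop 0).mono fun N hN => ?_)
    have hN : (0 : ℝ) < N := by exact_mod_cast hN
    have hsplit : ((factorAt u 0 (N * n)).count c : ℝ) / (N * n : ℕ) - x / n =
        (((factorAt u 0 (N * n)).count c : ℝ) - N * x) / (N * n) := by
      push_cast; field_simp
    rw [hsplit, abs_div, abs_of_pos (mul_pos hN hn'), div_le_div_iff₀ (mul_pos hN hn') hn']
    nlinarith [hblock N]
  calc |x - n * α| = n * |α - x / n| := by
        rw [← abs_of_pos hn', ← abs_mul, abs_sub_comm, abs_of_pos hn']; congr 1; field_simp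
    _ ≤ n * (1 / n) := by gcongr
    _ = 1 := by field_simp

end Balanced

lemma two_le_abs_sum_range_succ {g : ℕ → ℤ} {d : ℕ} (hd : 0 < d) (hg : ∀ r s, g r - g s ≤ 1)
    (h0 : |g 0| = 1) (hd' : g d ≠ 0) : 2 ≤ |∑ r ∈ Finset.range (d + 1), g r| := by
  wlog hpos : g 0 = 1 generalizing g
  · have := this (g := fun r => -g r) (fun r s => by linarith [hg s r]) (by simpa using h0)
      (neg_ne_zero.2 hd') (by rcases abs_eq (zero_le_one' ℤ) |>.1 h0 with h | h <;> omega)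
    simpa [Finset.sum_neg_distrib] using this
  have hnonneg (r : ℕ) : 0 ≤ g r := by linarith [hg 0 r]
  have hd1 : 1 ≤ g d := lt_of_le_of_ne (hnonneg d) (Ne.symm hd')
  have hfirst : g 0 ≤ ∑ r ∈ Finset.range d, g r :=
    Finset.single_le_sum (fun r _ => hnonneg r) (Finset.mem_range.2 hd)
  rw [Finset.sum_range_succ]
  exact le_abs_self _ |>.trans' (by omega)

section Binary

variable {u : ℕ → Bool} {α : ℝ}

lemma apply_add_eq_of_count_false_factorAt_eq {i n : ℕ}
    (h : (factorAt u i n).count false = (factorAt u (i + 1) n).count false) : u (i + n) = u i := by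
  have hright := congrArg (List.count false) (factorAt_add u i n 1)
  have hleft := congrArg (List.count false) (factorAt_add u i 1 n)
  rw [Nat.add_comm 1 n] at hleft
  simp only [List.count_append, factorAt_one, List.count_singleton, beq_iff_eq] at hright hleft
  cases hu : u (i + n) <;> cases hi : u i <;> simp_all

lemma eventuallyPeriodic_of_count_false_factorAt_eq {n N : ℕ} (hn : 0 < n)
    (h : ∀ i, N ≤ i → (factorAt u i n).count false = (factorAt u (i + 1) n).count false) :
    EventuallyPeriodic u :=
  ⟨n, hn, N, fun i hi => apply_add_eq_of_count_false_factorAt_eq (h i hi)⟩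

lemma infinite_setOf_count_false_factorAt_ne (hu : ¬ EventuallyPeriodic u) {n : ℕ} (hn : 0 < n)
    (p : ℤ) : {i | ((factorAt u i n).count false : ℤ) ≠ p}.Infinite :=
  Set.infinite_of_forall_exists_gt fun N => by
    by_contra! h
    have hp (i : ℕ) (hi : N < i) : ((factorAt u i n).count false : ℤ) = p := by
      by_contra hne
      exact absurd (h i hne) (by omega)
    refine hu (eventuallyPeriodic_of_count_false_factorAt_eq hn (N := N + 1) fun i hi => ?_)
    have := hp i (by omega)
    have := hp (i + 1) (by omega)
    omega

lemma HasFreq.count_true (hf : HasFreq u false α) : HasFreq u true (1 - α) := by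
  refine (tendsto_const_nhds.sub hf).congr' ((eventually_gt_atTop 0).mono fun n hn => ?_)
  have hcount : ((factorAt u 0 n).count true : ℝ) + (factorAt u 0 n).count false = n := by
    exact_mod_cast (factorAt u 0 n).count_true_add_count_false.trans (length_factorAt u 0 n)
  have hn : (n : ℝ) ≠ 0 := by positivity
  field_simp
  linarith

end Binary

namespace IsSturmian

variable {u : ℕ → Bool} {α : ℝ}

/-- The windows of length `n` starting at the positions of one residue class mod `n`
tile longer windows; if `n * α = p`, two windows of count `≠ p` in the same class would
make a longer window deviate from its expected count by `2`. -/
lemma mul_freq_ne_intCast (hu : IsSturmian u) (hf : HasFreq u false α) {n : ℕ} (hn : 0 < n)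
    (p : ℤ) : (n : ℝ) * α ≠ p := by
  intro hp
  have hnear (i m : ℕ) : |((factorAt u i (m * n)).count false : ℤ) - m * p| ≤ 1 := by
    have := hu.2.abs_count_factorAt_sub_mul_le hf i (m * n)
    rw [Nat.cast_mul, mul_assoc, hp] at this
    exact_mod_cast this
  obtain ⟨i, hi, j, hj, hij, hmod⟩ :=
    (infinite_setOf_count_false_factorAt_ne hu.1 hn p).exists_ne_map_eq_of_mapsTo
      (f := (· % n)) (fun i _ => Set.mem_Iio.2 (Nat.mod_lt i hn)) (Set.finite_Iio n)
  wlog hlt : i < j generalizing i j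
  · exact this j hj i hi hij.symm hmod.symm (by omega)
  obtain ⟨d, hd⟩ := (Nat.modEq_iff_dvd' hlt.le).1 hmod
  have hj' : j = i + d * n := by rw [Nat.mul_comm] at hd; omega
  subst hj'
  have hd0 : 0 < d := Nat.pos_of_ne_zero fun h => by simp [h] at hlt
  have hdev := two_le_abs_sum_range_succ
    (g := fun r => ((factorAt u (i + r * n) n).count false : ℤ) - p) hd0
    (fun r s => by simpa using hu.2.count_factorAt_sub_le false _ _ n)
    (le_antisymm (by simpa using hnear i 1) (Int.one_le_abs (by simpa [sub_eq_zero] using hi)))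
    (by simpa [sub_eq_zero] using hj)
  have hsum : ∑ r ∈ Finset.range (d + 1), (((factorAt u (i + r * n) n).count false : ℤ) - p) =
      (factorAt u i ((d + 1) * n)).count false - (d + 1 : ℕ) * p := by
    simp [count_factorAt_mul, Finset.sum_sub_distrib]
  have := hnear i (d + 1)
  rw [hsum] at hdev
  omega

lemma abs_count_factorAt_sub_mul_lt (hu : IsSturmian u) (hf : HasFreq u false α) (i n : ℕ) :
    |((factorAt u i n).count false : ℝ) - n * α| < 1 := by
  rcases n.eq_zero_or_pos with rfl | hn
  · simp [factorAt]
  refine (hu.2.abs_count_factorAt_sub_mul_le hf i n).lt_of_ne fun h => ?_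
  rcases eq_or_eq_neg_of_abs_eq h with h | h
  · exact hu.mul_freq_ne_intCast hf hn ((factorAt u i n).count false - 1) (by push_cast; linarith)
  · exact hu.mul_freq_ne_intCast hf hn ((factorAt u i n).count false + 1) (by push_cast; linarith)

/-- Any two windows of length `n` are within `1` of each other, so if none had count `l`,
all would share the same count `l ± 1`, and `u` would be periodic with period `n`. -/
lemma exists_count_false_factorAt_eq (hu : IsSturmian u) (hf : HasFreq u false α) {n l : ℕ}
    (hl : |(l : ℝ) - n * α| < 1) : ∃ i, (factorAt u i n).count false = l := by
  rcases n.eq_zero_or_pos with rfl | hn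
  · simp only [Nat.cast_zero, zero_mul, sub_zero, Nat.abs_cast] at hl
    obtain rfl : l = 0 := Nat.lt_one_iff.1 (by exact_mod_cast hl)
    exact ⟨0, by simp [factorAt]⟩
  by_contra! hne
  have hnear (i : ℕ) : |((factorAt u i n).count false : ℤ) - l| < 2 := by
    have hwin := abs_le.1 (hu.2.abs_count_factorAt_sub_mul_le hf i n)
    have : |((factorAt u i n).count false : ℝ) - l| < 2 := by
      rw [abs_lt] at hl ⊢; constructor <;> linarith [hwin.1, hwin.2]
    exact_mod_cast this
  refine hu.1 (eventuallyPeriodic_of_count_false_factorAt_eq hn (N := 0) fun i _ => ?_)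
  have := hnear i
  have := hnear (i + 1)
  have := hne i
  have := hne (i + 1)
  have := hu.2.count_factorAt_sub_le false i (i + 1) n
  have := hu.2.count_factorAt_sub_le false (i + 1) i n
  rw [abs_lt] at *
  omega

lemma exists_factor_count_iff (hu : IsSturmian u) (hf : HasFreq u false α) (k l : ℕ) :
    (∃ w : List Bool, IsFactor u w ∧ w.count true = k ∧ w.count false = l) ↔
      |(l : ℝ) - (k + l) * α| < 1 := by
  constructor
  · rintro ⟨w, ⟨i, hw⟩, rfl, rfl⟩
    have := hu.abs_count_factorAt_sub_mul_lt hf i w.length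
    rwa [← hw, ← w.count_true_add_count_false, Nat.cast_add] at this
  · intro h
    obtain ⟨i, hi⟩ := hu.exists_count_false_factorAt_eq hf (n := k + l) (by push_cast; exact h)
    refine ⟨factorAt u i (k + l), isFactor_factorAt u i (k + l), ?_, hi⟩
    have := (factorAt u i (k + l)).count_true_add_count_false
    rw [length_factorAt] at this
    omega

lemma freq_pos (hu : IsSturmian u) (hf : HasFreq u false α) : 0 < α := by
  refine (ge_of_tendsto' hf fun n => by positivity).lt_of_ne fun h => ?_
  exact hu.mul_freq_ne_intCast hf one_pos 0 (by simp [← h])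

end IsSturmian

/-- Let `u` be a Sturmian sequence with slope
`θ = ρ_a(u)/ρ_b(u) < 1` and `δ = θ⁻¹`. Then `u` contains a factor `w` with
`|w|_b = k` and `|w|_a = l` if and only if `|l·δ − k| < δ + 1`. -/
theorem sturmian_factor_parikh_iff
    (u : ℕ → Bool) (θ δ : ℝ)
    (hu : IsSturmian u) (hθ : HasSlope u θ) (hδ : δ = θ⁻¹)
    (k l : ℕ) :
    (∃ w : List Bool, IsFactor u w ∧ w.count true = k ∧ w.count false = l) ↔
      |(l : ℝ) * δ - k| < δ + 1 := by
  obtain ⟨α, ρb, hfa, hfb, -, rfl⟩ := hθ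
  obtain rfl : ρb = 1 - α := tendsto_nhds_unique hfb hfa.count_true
  have hα := hu.freq_pos hfa
  have hscale : (l : ℝ) * δ - k = ((l : ℝ) - (k + l) * α) / α := by
    rw [hδ, inv_div]; field_simp; ring
  have hδ1 : δ + 1 = 1 / α := by
    rw [hδ, inv_div]; field_simp; ring
  rw [hu.exists_factor_count_iff hfa, hscale, hδ1, abs_div, abs_of_pos hα,
    div_lt_div_iff_of_pos_right hα]

end Paper
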